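/- arXiv:2510.15692 — 3 statements merged into one kernel-verified Lean document; each statement's English description precedes it below -/
import Mathlib

section
/- In the ring of symmetric functions, the power sum symmetric function p_d equals the alternating sum of Schur functions over hook partitions: p_d = Σ_{m+n+1=d} (-1)^n s_{(m+1,1^n)}, where (m+1,1^n) denotes the hook partition with arm m and leg n. -/
open MvPolynomial

/-- The alternant `a_{(e₀,…,e_{d-1})} = det(xᵢ^{eⱼ})` in `d` variables. -/
noncomputable def alternant (d : ℕ) (e : Fin d → ℕ) : MvPolynomial (Fin d) ℤ :=
  Matrix.det (Matrix.of fun i j : Fin d => X i ^ (e j))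

/-- The hook partition `(m+1, 1^n)` of `d = m + n + 1`, as a function giving its parts
(padded by zeros): part `0` is `m+1`, parts `1,…,n` equal `1`, the rest are `0`. -/
def hookPart (d n : ℕ) (j : Fin d) : ℕ :=
  if (j : ℕ) = 0 then d - n else if (j : ℕ) ≤ n then 1 else 0

/-- In the ring of symmetric functions, the power sum `p_d` equals the
alternating sum of Schur functions over hook partitions:
`p_d = ∑_{m+n+1=d} (-1)^n s_{(m+1,1^n)}`.
Formalized in `d` variables via the bialternant definition of Schur polynomials
(`s_λ = a_{λ+δ} / a_δ` with `δ = (d-1, d-2, …, 0)`), i.e. as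
`a_δ · p_d = ∑_{n=0}^{d-1} (-1)^n a_{(d-n,1^n)+δ}`. -/
theorem stmt2 (d : ℕ) (hd : 0 < d) :
    alternant d (fun j => d - 1 - (j : ℕ)) * (∑ i : Fin d, X i ^ d) =
      ∑ n ∈ Finset.range d,
        (-1 : MvPolynomial (Fin d) ℤ) ^ n *
          alternant d (fun j => hookPart d n j + (d - 1 - (j : ℕ))) := by
  obtain ⟨m, rfl⟩ := Nat.exists_eq_succ_of_ne_zero hd.ne'
  simp only [Nat.succ_eq_add_one] at *
  set R := MvPolynomial (Fin (m + 1)) ℤ with hR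
  set A : Matrix (Fin (m + 1)) (Fin (m + 1)) R :=
    Matrix.of fun i j => X i ^ (m + 1 - 1 - (j : ℕ)) with hA
  -- Step 1: each hook alternant is, up to sign, the determinant of `A` with one
  -- column's exponents raised by `d`.
  have key : ∀ n : Fin (m + 1),
      (-1 : R) ^ (n : ℕ) *
          alternant (m + 1) (fun j => hookPart (m + 1) (n : ℕ) j + (m + 1 - 1 - (j : ℕ)))
        = (A.updateCol n fun i => X i ^ (m + 1) * A i n).det := by
    intro n
    set M : Matrix (Fin (m + 1)) (Fin (m + 1)) R :=
      Matrix.of fun i j => X i ^ (hookPart (m + 1) (n : ℕ) j + (m + 1 - 1 - (j : ℕ))) with hM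
    have hsub : A.updateCol n (fun i => X i ^ (m + 1) * A i n)
        = M.submatrix id (Fin.cycleRange n) := by
      refine Matrix.ext fun i j => ?_
      rcases lt_trichotomy j n with h | h | h
      · have hjn : (j : ℕ) < (n : ℕ) := h
        have hco : ((Fin.cycleRange n j : Fin (m + 1)) : ℕ) = (j : ℕ) + 1 :=
          Fin.coe_cycleRange_of_lt h
        have hnm : (n : ℕ) ≤ m := Fin.is_le n
        rw [Matrix.submatrix_apply, id_eq, Matrix.updateCol_apply, if_neg h.ne]
        simp only [hA, hM, Matrix.of_apply, hookPart, hco]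
        rw [if_neg (by omega), if_pos (by omega)]
        congr 1
        omega
      · have hnm : (n : ℕ) ≤ m := Fin.is_le n
        rw [Matrix.submatrix_apply, id_eq, h, Fin.cycleRange_self,
          Matrix.updateCol_apply, if_pos rfl]
        simp only [hA, hM, Matrix.of_apply, hookPart, Fin.val_zero, eq_self_iff_true, if_true,
          ite_true, ← pow_add]
        congr 1
        omega
      · have hjn : (n : ℕ) < (j : ℕ) := h
        rw [Matrix.submatrix_apply, id_eq, Fin.cycleRange_of_gt h,
          Matrix.updateCol_apply, if_neg h.ne']
        simp only [hA, hM, Matrix.of_apply, hookPart]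
        rw [if_neg (by omega), if_neg (by omega), zero_add]
    have hdet : (M.submatrix id (Fin.cycleRange n)).det
        = ((Equiv.Perm.sign (Fin.cycleRange n) : ℤ) : R) * M.det :=
      Matrix.det_permute' _ M
    rw [hsub, hdet, Fin.sign_cycleRange]
    show (-1 : R) ^ (n : ℕ) * M.det = _
    push_cast
    ring
  -- Step 2: multilinearity/adjugate computation.
  have main : A.det * (∑ i : Fin (m + 1), X i ^ (m + 1))
      = ∑ n : Fin (m + 1), (A.updateCol n fun i => X i ^ (m + 1) * A i n).det := by
    have h1 : ∀ n : Fin (m + 1),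
        (A.updateCol n fun i => X i ^ (m + 1) * A i n).det
          = ∑ k : Fin (m + 1), (X k ^ (m + 1) * A k n) * Matrix.cramer A (Pi.single k 1) n := by
      intro n
      rw [← Matrix.cramer_apply]
      have hb : (fun i => X i ^ (m + 1) * A i n)
          = ∑ k : Fin (m + 1), (X k ^ (m + 1) * A k n) • (Pi.single k 1 : Fin (m + 1) → R) := by
        funext i
        simp [Pi.single_apply, mul_ite]
      rw [hb, map_sum]
      rw [Finset.sum_apply]
      refine Finset.sum_congr rfl fun k _ => ?_
      rw [LinearMap.map_smul]
      simp [smul_eq_mul]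
    rw [Finset.sum_congr rfl fun n _ => h1 n, Finset.sum_comm]
    rw [Finset.mul_sum]
    refine Finset.sum_congr rfl fun k _ => ?_
    have h2 : ∑ n : Fin (m + 1), (X k ^ (m + 1) * A k n) * Matrix.cramer A (Pi.single k 1) n
        = X k ^ (m + 1) * ∑ n : Fin (m + 1), A k n * Matrix.cramer A (Pi.single k 1) n := by
      rw [Finset.mul_sum]
      exact Finset.sum_congr rfl fun n _ => by ring
    rw [h2]
    have h3 : ∑ n : Fin (m + 1), A k n * Matrix.cramer A (Pi.single k 1) n
        = Matrix.mulVec A (Matrix.cramer A (Pi.single k 1)) k := by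
      simp [Matrix.mulVec, dotProduct]
    rw [h3, Matrix.mulVec_cramer]
    simp [mul_comm]
  have lhs_eq : alternant (m + 1) (fun j => m + 1 - 1 - (j : ℕ)) = A.det := rfl
  rw [lhs_eq, main]
  rw [← Fin.sum_univ_eq_sum_range
    (fun n => (-1 : R) ^ n *
      alternant (m + 1) (fun j => hookPart (m + 1) n j + (m + 1 - 1 - (j : ℕ)))) (m + 1)]
  exact Finset.sum_congr rfl fun n _ => (key n).symm
end

section
/- Let d, m be coprime positive integers, p a prime, and μ a partition of pd such that not every part of μ is divisible by p. Then the rational function f_{p,m,μ}(x) = (∏_{i=1}^{l(μ)} Q_{pm}(x^{μ_i})) / (Q_{pm}(x) Q_p(x)) is a Laurent polynomial in x, and lies in ℚ[(x - x^{-1})^2]. -/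
/-!
Writing `Q_n(x^c) = x^{-c(n-1)} [n]_{x^{2c}}` with `[n]_y = (y^n - 1)/(y - 1)` turns the
divisibility into one between polynomials in `y = x²`, which is checked on cyclotomic factors:
`Φ_e ∣ [n]_{y^c}` whenever `e ∣ cn` and `e ∤ c`. For `e ∣ pm` with `e ∉ {1, p}` some part is
not divisible by `e`, as otherwise `e ∣ gcd(pd, pm) = p`; and `Φ_p`, which the denominator
contains twice, divides `[pm]_{y^c}` for every part `c` prime to `p`, of which there are at least
two because they sum to a multiple of `p`. The quotient is then a Laurent polynomial in `x²` (its
exponent shift is even because `d` and `m` are not both even) fixed by `x ↦ x⁻¹`, hence a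
polynomial in `x² + x⁻² = (x - x⁻¹)² + 2`: `x^{2n} + x^{-2n}` is the Dickson polynomial
`D_n(x² + x⁻²)`.
-/

open LaurentPolynomial

/-- The Laurent polynomial `Q_n(x^k) = ∑_{j=0}^{n-1} x^{k(n-1-2j)}`, where
`Q_n(y) = (y^n - y^{-n})/(y - y^{-1})`. -/
noncomputable def QL (n : ℕ) (k : ℤ) : LaurentPolynomial ℚ :=
  ∑ j ∈ Finset.range n, T (k * ((n : ℤ) - 1 - 2 * (j : ℤ)))

open Polynomial

noncomputable def geomSumXPow (n c : ℕ) : ℚ[X] := ∑ j ∈ Finset.range n, (X ^ c) ^ j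

lemma geomSumXPow_mul (n c : ℕ) : geomSumXPow n c * (X ^ c - 1) = X ^ (c * n) - 1 := by
  rw [geomSumXPow, geom_sum_mul, pow_mul]

lemma geomSumXPow_ne_zero {n : ℕ} (hn : n ≠ 0) (c : ℕ) : geomSumXPow n c ≠ 0 := by
  intro h
  simpa [geomSumXPow, eval_finsetSum, hn] using congrArg (eval 1) h

lemma geomSumXPow_one_eq_prod_cyclotomic {n : ℕ} (hn : 0 < n) :
    geomSumXPow n 1 = ∏ e ∈ n.divisors.erase 1, cyclotomic e ℚ := by
  simp [geomSumXPow, prod_cyclotomic_eq_geom_sum hn]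

lemma geomSumXPow_prime_one {p : ℕ} (hp : p.Prime) : geomSumXPow p 1 = cyclotomic p ℚ := by
  have := Fact.mk hp
  simp [geomSumXPow, cyclotomic_prime]

lemma isCoprime_cyclotomic_X_pow_sub_one {e c : ℕ} (hc : 0 < c) (hec : ¬ e ∣ c) :
    IsCoprime (cyclotomic e ℚ) (X ^ c - 1) := by
  rw [← prod_cyclotomic_eq_X_pow_sub_one hc]
  exact IsCoprime.prod_right fun i hi =>
    cyclotomic.isCoprime_rat fun hei => hec (hei ▸ Nat.dvd_of_mem_divisors hi)

lemma cyclotomic_dvd_geomSumXPow {e n c : ℕ} (he : e ∣ c * n) (hec : ¬ e ∣ c) :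
    cyclotomic e ℚ ∣ geomSumXPow n c := by
  have hc : 0 < c := Nat.pos_of_ne_zero fun hc => hec (hc ▸ dvd_zero e)
  obtain ⟨k, hk⟩ := he
  have hdvd : cyclotomic e ℚ ∣ geomSumXPow n c * (X ^ c - 1) := by
    rw [geomSumXPow_mul, hk, pow_mul]
    exact (cyclotomic.dvd_X_pow_sub_one e ℚ).trans (sub_one_dvd_pow_sub_one _ k)
  exact (isCoprime_cyclotomic_X_pow_sub_one hc hec).dvd_of_dvd_mul_right hdvd

lemma two_le_card_filter_not_dvd {p : ℕ} {s : Multiset ℕ} (hs : p ∣ s.sum)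
    (h : ∃ c ∈ s, ¬ p ∣ c) : 2 ≤ Multiset.card (s.filter fun c => ¬ p ∣ c) := by
  set t := s.filter fun c => ¬ p ∣ c
  have ht : p ∣ t.sum := by
    rw [← Multiset.sum_filter_add_sum_filter_not (p ∣ ·)] at hs
    exact (Nat.dvd_add_right (Multiset.dvd_sum fun c hc => (Multiset.mem_filter.1 hc).2)).1 hs
  obtain ⟨c, hc, hpc⟩ := h
  have h0 : 0 < Multiset.card t :=
    Multiset.card_pos_iff_exists_mem.2 ⟨c, Multiset.mem_filter.2 ⟨hc, hpc⟩⟩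
  by_contra! hlt
  obtain ⟨x, hx⟩ := Multiset.card_eq_one.1 (by omega : Multiset.card t = 1)
  have hxt : x ∈ t := hx ▸ Multiset.mem_singleton_self x
  exact (Multiset.mem_filter.1 hxt).2 (by simpa [hx] using ht)

lemma cyclotomic_sq_dvd_prod_geomSumXPow {p n : ℕ} (hpn : p ∣ n) {s : Multiset ℕ}
    (hs : p ∣ s.sum) (h : ∃ c ∈ s, ¬ p ∣ c) :
    cyclotomic p ℚ ^ 2 ∣ (s.map (geomSumXPow n)).prod := by
  set t := s.filter fun c => ¬ p ∣ c
  calc cyclotomic p ℚ ^ 2 ∣ cyclotomic p ℚ ^ Multiset.card t :=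
        pow_dvd_pow _ (two_le_card_filter_not_dvd hs h)
    _ = (t.map fun _ => cyclotomic p ℚ).prod := by simp
    _ ∣ (t.map (geomSumXPow n)).prod := Multiset.prod_dvd_prod_of_dvd _ _ fun c hc =>
        cyclotomic_dvd_geomSumXPow (dvd_mul_of_dvd_right hpn c) (Multiset.mem_filter.1 hc).2
    _ ∣ (s.map (geomSumXPow n)).prod :=
        Multiset.prod_dvd_prod_of_le (Multiset.map_le_map (Multiset.filter_le _ _))

lemma geomSumXPow_mul_dvd_prod {p d m : ℕ} (hp : p.Prime) (hm : 0 < m) (hcop : d.Coprime m)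
    {s : Multiset ℕ} (hs : s.sum = p * d) (h : ∃ c ∈ s, ¬ p ∣ c) :
    geomSumXPow (p * m) 1 * geomSumXPow p 1 ∣ (s.map (geomSumXPow (p * m))).prod := by
  have hpS : p ∈ (p * m).divisors.erase 1 := by
    simp [hp.one_lt.ne', hp.ne_zero, hm.ne']
  rw [geomSumXPow_one_eq_prod_cyclotomic (Nat.mul_pos hp.pos hm), geomSumXPow_prime_one hp,
    ← Finset.mul_prod_erase _ _ hpS, mul_right_comm, ← sq]
  refine IsCoprime.mul_dvd ?_ (cyclotomic_sq_dvd_prod_geomSumXPow (dvd_mul_right p m)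
    (hs ▸ dvd_mul_right p d) h) ?_
  · exact (IsCoprime.prod_right fun e he => cyclotomic.isCoprime_rat
      (Finset.ne_of_mem_erase he).symm).pow_left
  refine Finset.prod_dvd_of_coprime
    (fun e _ f _ hef => cyclotomic.isCoprime_rat hef) fun e he => ?_
  obtain ⟨hep, he1, hepm⟩ : e ≠ p ∧ e ≠ 1 ∧ e ∣ p * m := by
    simp only [Finset.mem_erase, Nat.mem_divisors] at he
    exact ⟨he.1, he.2.1, he.2.2.1⟩
  have hsum : ¬ e ∣ s.sum := by
    intro hed
    have : e ∣ p := by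
      rw [hs] at hed
      simpa [Nat.gcd_mul_left, hcop.gcd_eq_one] using Nat.dvd_gcd hed hepm
    rcases hp.eq_one_or_self_of_dvd e this with rfl | rfl <;> contradiction
  obtain ⟨c, hc, hec⟩ : ∃ c ∈ s, ¬ e ∣ c := by
    by_contra! hall
    exact hsum (Multiset.dvd_sum hall)
  exact (cyclotomic_dvd_geomSumXPow (dvd_mul_of_dvd_right hepm c) hec).trans
    (Multiset.dvd_prod (Multiset.mem_map_of_mem _ hc))

lemma QL_natCast (n c : ℕ) :
    QL n c = aeval (T 2) (geomSumXPow n c) * T (-(c * ((n : ℤ) - 1))) := by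
  rw [QL, geomSumXPow, map_sum, Finset.sum_mul, ← Finset.sum_range_reflect]
  refine Finset.sum_congr rfl fun j hj => ?_
  have hj : ((n - 1 - j : ℕ) : ℤ) = n - 1 - j := by
    have := Finset.mem_range.1 hj
    omega
  rw [map_pow, map_pow, aeval_X, T_pow, T_pow, ← T_add, hj]
  ring_nf

lemma QL_one (n : ℕ) : QL n 1 = aeval (T 2) (geomSumXPow n 1) * T (-((n : ℤ) - 1)) := by
  simpa using QL_natCast n 1

lemma invert_QL (n : ℕ) (k : ℤ) : invert (QL n k) = QL n k := by
  rw [QL, map_sum, ← Finset.sum_range_reflect]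
  refine Finset.sum_congr rfl fun j hj => ?_
  have hj : ((n - 1 - j : ℕ) : ℤ) = n - 1 - j := by
    have := Finset.mem_range.1 hj
    omega
  rw [invert_T, hj]
  ring_nf

lemma aeval_T_two_eq_toLaurent {R : Type*} [CommSemiring R] (g : R[X]) :
    aeval (T 2) g = toLaurent (expand R 2 g) := by
  have : aeval (T 2) = (toLaurentAlg : R[X] →ₐ[R] R[T;T⁻¹]).comp (expand R 2) := by
    ext
    simp
  rw [this]
  rfl

lemma QL_one_ne_zero {n : ℕ} (hn : n ≠ 0) : QL n 1 ≠ 0 := by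
  rw [QL_one, aeval_T_two_eq_toLaurent]
  exact mul_ne_zero (Polynomial.toLaurent_ne_zero.2 ((expand_ne_zero two_pos).2
    (geomSumXPow_ne_zero hn 1))) (isUnit_T _).ne_zero

lemma prod_map_QL (n : ℕ) (s : Multiset ℕ) :
    (s.map fun c : ℕ => QL n c).prod =
      aeval (T 2) (s.map (geomSumXPow n)).prod * T (-(s.sum * ((n : ℤ) - 1))) := by
  induction s using Multiset.induction_on with
  | empty => simp
  | cons c s ih =>
    rw [Multiset.map_cons, Multiset.prod_cons, ih, QL_natCast, Multiset.map_cons,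
      Multiset.prod_cons, map_mul, mul_mul_mul_comm, ← T_add, Multiset.sum_cons]
    congr 2
    push_cast
    ring

lemma T_add_T_neg_eq_aeval {R : Type*} [CommRing R] (n : ℕ) :
    (T (2 * n) + T (-(2 * n)) : R[T;T⁻¹]) =
      aeval ((T 1 - T (-1)) ^ 2) ((dickson 1 (1 : R) n).comp (X + 2)) := by
  have hu : aeval ((T 1 - T (-1) : R[T;T⁻¹]) ^ 2) (X + 2 : R[X]) = T 2 + T (-2) := by
    simp only [map_add, aeval_X, map_ofNat, sub_sq, T_pow, mul_assoc, ← T_add]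
    norm_num
    ring
  rw [aeval_comp, hu, aeval_def, ← eval_map, map_dickson, map_one,
    dickson_one_one_eval_add_inv _ _ (by rw [← T_add]; simp), T_pow, T_pow]
  ring_nf

lemma exists_aeval_eq_of_invert_eq {K : Type*} [Field K] [NeZero (2 : K)] (G : K[X]) (r : ℤ)
    (h : invert (aeval (T 2 : K[T;T⁻¹]) G * T (2 * r)) = aeval (T 2) G * T (2 * r)) :
    ∃ P : K[X], aeval (T 2 : K[T;T⁻¹]) G * T (2 * r) = aeval ((T 1 - T (-1)) ^ 2) P := by
  set S := (aeval (R := K) ((T 1 - T (-1) : K[T;T⁻¹]) ^ 2)).range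
  have hsymm : ∀ g : K[X],
      aeval (T 2 : K[T;T⁻¹]) g * T (2 * r) + invert (aeval (T 2) g * T (2 * r)) ∈ S := by
    intro g
    induction g using Polynomial.induction_on' with
    | add f g hf hg => simpa only [map_add, add_mul, add_add_add_comm] using add_mem hf hg
    | monomial n a =>
      have : aeval (T 2 : K[T;T⁻¹]) (monomial n a) * T (2 * r) = a • T (2 * (n + r)) := by
        rw [aeval_monomial, T_pow, mul_assoc, ← T_add, Algebra.smul_def]
        ring_nf
      rw [this, map_smul, invert_T, ← smul_add]
      refine Subalgebra.smul_mem _ ?_ a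
      obtain ⟨k, hk | hk⟩ := Int.eq_nat_or_neg (n + r)
      · exact ⟨_, by rw [hk, T_add_T_neg_eq_aeval]; rfl⟩
      · exact ⟨_, by rw [hk, mul_neg, neg_neg, add_comm, T_add_T_neg_eq_aeval]; rfl⟩
  obtain ⟨P, hP⟩ : aeval (T 2) G * T (2 * r) ∈ S := by
    have := Subalgebra.smul_mem S (hsymm G) (2⁻¹ : K)
    rwa [h, ← two_smul K, smul_smul, inv_mul_cancel₀ two_ne_zero, one_smul] at this
  exact ⟨P, hP.symm⟩

lemma even_QL_exponent_shift {p d m : ℕ} (hp : p.Prime) (hcop : d.Coprime m) :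
    Even (((p : ℤ) * m - 1) + ((p : ℤ) - 1) - (p : ℤ) * d * ((p : ℤ) * m - 1)) := by
  rcases hp.eq_two_or_odd' with rfl | hodd
  · exact ⟨m - d * (2 * m - 1), by push_cast; ring⟩
  have hdm : Odd d ∨ Odd m := by
    by_contra! h
    simp only [Nat.not_odd_iff_even] at h
    simpa [hcop.gcd_eq_one] using Nat.dvd_gcd h.1.two_dvd h.2.two_dvd
  rcases hdm with h | h <;> simp [Int.even_sub, Int.even_add, Int.even_mul, hodd, h, parity_simps]

theorem stmt11_general (d m p : ℕ) (hm : 1 ≤ m) (hcop : Nat.Coprime d m)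
    (hp : p.Prime) (μ : Nat.Partition (p * d)) (hμ : ∃ c ∈ μ.parts, ¬ p ∣ c) :
    ∃ P : Polynomial ℚ,
      (μ.parts.map (fun c => QL (p * m) (c : ℤ))).prod =
      QL (p * m) 1 * QL p 1 * Polynomial.aeval ((T 1 - T (-1)) ^ 2) P := by
  obtain ⟨G, hG⟩ := geomSumXPow_mul_dvd_prod hp hm hcop μ.parts_sum hμ
  obtain ⟨r, hr⟩ := even_QL_exponent_shift hp hcop
  set f := aeval (T 2 : ℚ[T;T⁻¹]) G * T (2 * r)
  have hprod : (μ.parts.map fun c : ℕ => QL (p * m) c).prod = QL (p * m) 1 * QL p 1 * f := by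
    have hT : (T (-((p * d : ℕ) * ((p * m : ℕ) - 1 : ℤ))) : ℚ[T;T⁻¹]) =
        T (-((p * m : ℕ) - 1 : ℤ)) * T (-((p : ℤ) - 1)) * T (2 * r) := by
      rw [← T_add, ← T_add]
      congr 1
      push_cast
      linarith
    rw [prod_map_QL, hG, μ.parts_sum, QL_one, QL_one, map_mul, map_mul, hT]
    ring
  have hf : invert f = f := by
    have h := congrArg invert hprod
    rw [map_multiset_prod, Multiset.map_map, map_mul, map_mul, invert_QL, invert_QL] at h
    simp only [Function.comp_def, invert_QL] at h
    exact mul_left_cancel₀ (mul_ne_zero (QL_one_ne_zero (Nat.mul_pos hp.pos hm).ne')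
      (QL_one_ne_zero hp.ne_zero)) (h.symm.trans hprod)
  obtain ⟨P, hP⟩ := exists_aeval_eq_of_invert_eq G r hf
  refine ⟨P, ?_⟩
  rw [← hP, ← hprod]
  -- the statement's `(c : ℤ)` coerces `μ.parts` itself to a `Multiset ℤ`
  simp

/-- Let `d, m` be coprime positive integers, `p` a prime, and `μ` a
partition of `pd` with not every part divisible by `p`. Then
`f_{p,m,μ}(x) = (∏ᵢ Q_{pm}(x^{μᵢ})) / (Q_{pm}(x) Q_p(x))` is a Laurent polynomial lying in
`ℚ[(x - x⁻¹)²]`; i.e. `Q_{pm}(x) Q_p(x)` divides `∏ᵢ Q_{pm}(x^{μᵢ})` in `ℚ[x,x⁻¹]` and the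
quotient is a polynomial in `(x - x⁻¹)²`. -/
theorem stmt11 (d m p : ℕ) (hd : 1 ≤ d) (hm : 1 ≤ m) (hcop : Nat.Coprime d m)
    (hp : p.Prime) (μ : Nat.Partition (p * d)) (hμ : ∃ c ∈ μ.parts, ¬ p ∣ c) :
    ∃ P : Polynomial ℚ,
      (μ.parts.map (fun c => QL (p * m) (c : ℤ))).prod =
      QL (p * m) 1 * QL p 1 * Polynomial.aeval ((T 1 - T (-1)) ^ 2) P :=
  stmt11_general d m p hm hcop hp μ hμ
end

section
/- Let p be prime and μ a partition of pd with not all parts divisible by p, and let β be a complex number of the form β = e^{sπi/(pm_0)} with gcd(s, pm_0) = 1, m_0 | m, m_0 > 1, where gcd(d,m) = 1. Then there exists a part μ_k of μ with β^{μ_k} - β^{-μ_k} ≠ 0 and β^{pm μ_k} - β^{-pm μ_k} = 0; consequently ∏_{i=1}^{l(μ)} Q_{pm}(β^{μ_i}) = 0. -/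
/-!
`β²` is a primitive `pm₀`-th root of unity, and `β^k = β^{-k}` exactly when `β^{2k} = 1`.
A part `c` with `p ∤ c` is not divisible by `pm₀`, while `pmc` is, so `c` is the required
part; the identity `(y - y⁻¹) Q_n(y) = yⁿ - y⁻ⁿ` at `y = β^c` then makes the factor
`Q_{pm}(β^c)` vanish.
-/

/-- `Q_n(y) = y^{n-1} + y^{n-3} + ⋯ + y^{-(n-1)}` (n terms), which equals
`(y^n - y^{-n})/(y - y^{-1})` when `y² ≠ 1`, and `Q_n(±1) = n(±1)^{n-1}`. -/
noncomputable def Qfun (n : ℕ) (y : ℂ) : ℂ :=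
  ∑ j ∈ Finset.range n, y ^ ((n : ℤ) - 1 - 2 * (j : ℤ))

lemma zpow_sub_zpow_neg_eq_zero_iff {K : Type*} [DivisionRing K] {β : K} (hβ : β ≠ 0) (n : ℤ) :
    β ^ n - β ^ (-n) = 0 ↔ (β ^ 2) ^ n = 1 := by
  rw [sub_eq_zero, zpow_neg, ← mul_eq_one_iff_eq_inv₀ (zpow_ne_zero n hβ), sq,
    (Commute.refl β).mul_zpow]

lemma mul_Qfun (n : ℕ) {y : ℂ} (hy : y ≠ 0) :
    (y - y⁻¹) * Qfun n y = y ^ (n : ℤ) - y ^ (-(n : ℤ)) := by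
  have step (j : ℕ) : (y - y⁻¹) * y ^ ((n : ℤ) - 1 - 2 * j) =
      y ^ ((n : ℤ) - 2 * j) - y ^ ((n : ℤ) - 2 * (j + 1 : ℕ)) := by
    rw [sub_mul, ← zpow_neg_one y, ← zpow_add₀ hy, ← zpow_one_add₀ hy]
    congr 2 <;> (push_cast; ring)
  simp only [Qfun, Finset.mul_sum, step, Finset.sum_range_sub']
  congr 2; ring

lemma Qfun_pow_eq_zero {β : ℂ} (hβ : β ≠ 0) {c n : ℕ} (h₁ : β ^ (c : ℤ) - β ^ (-(c : ℤ)) ≠ 0)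
    (h₂ : β ^ ((n : ℤ) * c) - β ^ (-((n : ℤ) * c)) = 0) : Qfun n (β ^ c) = 0 := by
  have hmul := mul_Qfun n (pow_ne_zero c hβ)
  rw [← zpow_natCast, ← zpow_neg, ← zpow_mul, ← zpow_mul, mul_neg,
    mul_comm (c : ℤ), h₂] at hmul
  exact (mul_eq_zero.mp hmul).resolve_left h₁

lemma isPrimitiveRoot_exp_div_sq {s N : ℕ} (hN : N ≠ 0) (hs : s.Coprime N) :
    IsPrimitiveRoot (Complex.exp (s * Real.pi * Complex.I / N) ^ 2) N := by
  convert Complex.isPrimitiveRoot_exp_of_coprime s N hN hs using 1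
  rw [← Complex.exp_nat_mul]
  congr 1
  push_cast
  ring

theorem stmt17_general (p d m m₀ s : ℕ) (hp : p.Prime)
    (hm₀ : m₀ ∣ m) (hm₀1 : 1 < m₀)
    (hs : Nat.gcd s (p * m₀) = 1)
    (μ : Nat.Partition (p * d)) (hμ : ∃ c ∈ μ.parts, ¬ p ∣ c)
    (β : ℂ) (hβ : β = Complex.exp ((s : ℂ) * Real.pi * Complex.I / ((p : ℂ) * m₀))) :
    (∃ c ∈ μ.parts, β ^ (c : ℤ) - β ^ (-(c : ℤ)) ≠ 0 ∧
      β ^ ((p : ℤ) * m * c) - β ^ (-((p : ℤ) * m * c)) = 0) ∧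
    (μ.parts.map (fun c => Qfun (p * m) (β ^ (c : ℕ)))).prod = 0 := by
  obtain ⟨c, hc, hpc⟩ := hμ
  have hζ : IsPrimitiveRoot (β ^ 2) (p * m₀) := by
    rw [hβ]
    exact_mod_cast isPrimitiveRoot_exp_div_sq (mul_ne_zero hp.ne_zero (by omega)) hs
  have hβ0 : β ≠ 0 := hβ ▸ Complex.exp_ne_zero _
  have h₁ : β ^ (c : ℤ) - β ^ (-(c : ℤ)) ≠ 0 := by
    rw [Ne, zpow_sub_zpow_neg_eq_zero_iff hβ0, zpow_natCast, hζ.pow_eq_one_iff_dvd]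
    exact fun h => hpc (dvd_of_mul_right_dvd h)
  have h₂ : β ^ ((p : ℤ) * m * c) - β ^ (-((p : ℤ) * m * c)) = 0 := by
    rw [zpow_sub_zpow_neg_eq_zero_iff hβ0, hζ.zpow_eq_one_iff_dvd]
    exact_mod_cast Dvd.dvd.mul_right (mul_dvd_mul_left p hm₀) c
  refine ⟨⟨c, hc, h₁, h₂⟩, Multiset.prod_eq_zero (Multiset.mem_map.mpr ⟨c, hc, ?_⟩)⟩
  exact Qfun_pow_eq_zero hβ0 h₁ (by exact_mod_cast h₂)

/-- Let `p` be prime, `gcd(d,m) = 1`, `μ` a partition of `pd` with not all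
parts divisible by `p`, and `β = e^{sπi/(pm₀)}` with `gcd(s, pm₀) = 1`, `m₀ ∣ m`, `m₀ > 1`.
Then some part `μₖ` satisfies `β^{μₖ} - β^{-μₖ} ≠ 0` and `β^{pmμₖ} - β^{-pmμₖ} = 0`;
consequently `∏ᵢ Q_{pm}(β^{μᵢ}) = 0`. -/
theorem stmt17 (p d m m₀ s : ℕ) (hp : p.Prime) (hd : 1 ≤ d) (hm : 1 ≤ m)
    (hcop : Nat.Coprime d m) (hm₀ : m₀ ∣ m) (hm₀1 : 1 < m₀)
    (hs : Nat.gcd s (p * m₀) = 1)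
    (μ : Nat.Partition (p * d)) (hμ : ∃ c ∈ μ.parts, ¬ p ∣ c)
    (β : ℂ) (hβ : β = Complex.exp ((s : ℂ) * Real.pi * Complex.I / ((p : ℂ) * m₀))) :
    (∃ c ∈ μ.parts, β ^ (c : ℤ) - β ^ (-(c : ℤ)) ≠ 0 ∧
      β ^ ((p : ℤ) * m * c) - β ^ (-((p : ℤ) * m * c)) = 0) ∧
    (μ.parts.map (fun c => Qfun (p * m) (β ^ (c : ℕ)))).prod = 0 :=
  stmt17_general p d m m₀ s hp hm₀ hm₀1 hs μ hμ β hβ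
end
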